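/- arXiv:1311.3046 — 5 statements merged into one kernel-verified Lean document; each statement's English description precedes it below -/
import Mathlib

section
/- For every matrix A in the 11-dimensional complex span L of the two-qubit Jordan–Wigner operators, their quadratic products, and the identity, the matrix exponential exp(A) is an invertible 2-input 2-output matchgate, i.e. exp(A) satisfies all ten matchgate identities. -/
noncomputable section

open Complex

/-- The ten matchgate identities for a 4×4 complex matrix `B`
(rows/columns indexed `0,1,2,3` corresponding to `1,2,3,4`). -/
def IsMatchgate (B : Matrix (Fin 4) (Fin 4) ℂ) : Prop :=
  B 0 0 * B 3 3 - B 0 3 * B 3 0 - B 1 1 * B 2 2 + B 1 2 * B 2 1 = 0 ∧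
  B 1 0 * B 3 3 - B 1 1 * B 3 2 + B 1 2 * B 3 1 - B 1 3 * B 3 0 = 0 ∧
  B 2 0 * B 3 3 - B 2 1 * B 3 2 + B 2 2 * B 3 1 - B 2 3 * B 3 0 = 0 ∧
  B 0 2 * B 3 3 - B 0 3 * B 3 2 - B 1 2 * B 2 3 + B 1 3 * B 2 2 = 0 ∧
  B 0 1 * B 3 3 - B 0 3 * B 3 1 - B 1 1 * B 2 3 + B 1 3 * B 2 1 = 0 ∧
  B 0 0 * B 1 3 - B 0 1 * B 1 2 + B 0 2 * B 1 1 - B 0 3 * B 1 0 = 0 ∧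
  B 0 0 * B 3 1 - B 0 1 * B 3 0 - B 1 0 * B 2 1 + B 1 1 * B 2 0 = 0 ∧
  B 0 1 * B 3 2 - B 0 2 * B 3 1 - B 1 0 * B 2 3 + B 1 3 * B 2 0 = 0 ∧
  B 0 0 * B 2 3 - B 0 1 * B 2 2 + B 0 2 * B 2 1 - B 0 3 * B 2 0 = 0 ∧
  B 0 0 * B 3 2 - B 0 2 * B 3 0 - B 1 0 * B 2 2 + B 1 2 * B 2 0 = 0

/- The eleven two-qubit operators (written as explicit 4×4 matrices in the basis
`00,01,10,11` ↔ `1,2,3,4`): the identity `I⊗I`, the (reversed) Jordan–Wigner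
operators `I⊗X, I⊗Y, X⊗Z, Y⊗Z`, and their quadratic products
`I⊗Z, X⊗Y, Y⊗Y, X⊗X, Y⊗X, Z⊗I`. -/

def mII : Matrix (Fin 4) (Fin 4) ℂ := 1
def mIX : Matrix (Fin 4) (Fin 4) ℂ := !![0,1,0,0; 1,0,0,0; 0,0,0,1; 0,0,1,0]
def mIY : Matrix (Fin 4) (Fin 4) ℂ := !![0,-I,0,0; I,0,0,0; 0,0,0,-I; 0,0,I,0]
def mXZ : Matrix (Fin 4) (Fin 4) ℂ := !![0,0,1,0; 0,0,0,-1; 1,0,0,0; 0,-1,0,0]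
def mYZ : Matrix (Fin 4) (Fin 4) ℂ := !![0,0,-I,0; 0,0,0,I; I,0,0,0; 0,-I,0,0]
def mIZ : Matrix (Fin 4) (Fin 4) ℂ := !![1,0,0,0; 0,-1,0,0; 0,0,1,0; 0,0,0,-1]
def mXY : Matrix (Fin 4) (Fin 4) ℂ := !![0,0,0,-I; 0,0,I,0; 0,-I,0,0; I,0,0,0]
def mYY : Matrix (Fin 4) (Fin 4) ℂ := !![0,0,0,-1; 0,0,1,0; 0,1,0,0; -1,0,0,0]
def mXX : Matrix (Fin 4) (Fin 4) ℂ := !![0,0,0,1; 0,0,1,0; 0,1,0,0; 1,0,0,0]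
def mYX : Matrix (Fin 4) (Fin 4) ℂ := !![0,0,0,-I; 0,0,-I,0; 0,I,0,0; I,0,0,0]
def mZI : Matrix (Fin 4) (Fin 4) ℂ := !![1,0,0,0; 0,1,0,0; 0,0,-1,0; 0,0,0,-1]

/-- The 11-dimensional span `L` of the two-qubit Jordan–Wigner operators, their
quadratic products and the identity. -/
def LJW : Submodule ℂ (Matrix (Fin 4) (Fin 4) ℂ) :=
  Submodule.span ℂ {mII, mIX, mIY, mXZ, mYZ, mIZ, mXY, mYY, mXX, mYX, mZI}

/-! The matchgate identities for `B` are linear combinations of the entries of the two equations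
`B J Bᵀ = e J` and `Bᵀ J B = e J`, for the antisymmetric form `J = matchgateForm` and a single
scalar `e`. Each generator of `L` satisfies the linear relation `A J + J Aᵀ = c J` (with `c = 2`
for the identity and `c = 0` otherwise), hence so does every `A ∈ L`. For such `A` we have
`Aᵀ = J⁻¹ (c - A) J`, so `exp A J (exp A)ᵀ = exp A exp (c - A) J = exp c J`; and since `J² = -1`,
`Aᵀ` satisfies the same relation, which gives the second equation. -/

open scoped Matrix

namespace Matrix

variable {n R : Type*} [Fintype n]

section CommRing

variable [CommRing R]

def conformalAlgebra (J : Matrix n n R) : Submodule R (Matrix n n R) where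
  carrier := {A | ∃ c : R, A * J + J * Aᵀ = c • J}
  zero_mem' := ⟨0, by simp⟩
  add_mem' := by
    rintro A B ⟨a, ha⟩ ⟨b, hb⟩
    exact ⟨a + b, by rw [transpose_add, add_mul, mul_add, add_smul, ← ha, ← hb]; abel⟩
  smul_mem' := by
    rintro r A ⟨a, ha⟩
    exact ⟨r * a, by rw [transpose_smul, smul_mul_assoc, mul_smul_comm, ← smul_add, ha, smul_smul]⟩

theorem mem_conformalAlgebra {J A : Matrix n n R} :
    A ∈ conformalAlgebra J ↔ ∃ c : R, A * J + J * Aᵀ = c • J :=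
  Iff.rfl

theorem transpose_mul_add_mul_eq_smul [DecidableEq n] {J A : Matrix n n R} {c : R}
    (hJ : J * J = -1) (h : A * J + J * Aᵀ = c • J) : Aᵀ * J + J * A = c • J :=
  calc Aᵀ * J + J * A = -(J * J) * Aᵀ * J - J * A * (J * J) := by rw [hJ]; noncomm_ring
    _ = -(J * (A * J + J * Aᵀ) * J) := by noncomm_ring
    _ = c • J := by rw [h, mul_smul_comm, smul_mul_assoc, hJ, neg_one_mul, smul_neg, neg_neg]

end CommRing

variable [DecidableEq n] {𝔸 : Type*} [NormedCommRing 𝔸] [NormedAlgebra ℚ 𝔸] [CompleteSpace 𝔸]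

theorem exp_smul_one (c : 𝔸) :
    NormedSpace.exp (c • 1 : Matrix n n 𝔸) = NormedSpace.exp c • 1 := by
  rw [smul_one_eq_diagonal, exp_diagonal, smul_one_eq_diagonal]
  congr 1
  ext
  simp

theorem exp_mul_mul_exp_transpose {J A : Matrix n n 𝔸} {c : 𝔸} (hJ : IsUnit J)
    (h : A * J + J * Aᵀ = c • J) :
    NormedSpace.exp A * J * (NormedSpace.exp A)ᵀ = NormedSpace.exp c • J := by
  have hJ' : IsUnit J.det := (isUnit_iff_isUnit_det J).mp hJ
  have hAt : Aᵀ = J⁻¹ * (c • 1 - A) * J := by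
    rw [mul_assoc, sub_mul, smul_one_mul, ← h, add_sub_cancel_left,
      nonsing_inv_mul_cancel_left _ _ hJ']
  have hcomm : Commute A (c • 1 - A) :=
    ((Commute.one_right A).smul_right c).sub_right (Commute.refl A)
  calc NormedSpace.exp A * J * (NormedSpace.exp A)ᵀ
      = NormedSpace.exp A * (J * (J⁻¹ * NormedSpace.exp (c • 1 - A) * J)) := by
        rw [← exp_transpose, hAt, exp_conj' _ _ hJ, mul_assoc]
    _ = NormedSpace.exp (A + (c • 1 - A)) * J := by
        rw [exp_add_of_commute _ _ hcomm, mul_assoc J⁻¹, mul_nonsing_inv_cancel_left _ _ hJ',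
          mul_assoc]
    _ = NormedSpace.exp c • J := by rw [add_sub_cancel, exp_smul_one, smul_one_mul]

end Matrix

def matchgateForm : Matrix (Fin 4) (Fin 4) ℂ := !![0,0,0,1; 0,0,-1,0; 0,1,0,0; -1,0,0,0]

theorem matchgateForm_mul_self : matchgateForm * matchgateForm = -1 := by
  ext i j
  fin_cases i <;> fin_cases j <;> simp [matchgateForm, Matrix.mul_apply, Fin.sum_univ_four]

theorem isUnit_matchgateForm : IsUnit matchgateForm :=
  IsUnit.of_mul_eq_one (-matchgateForm) (by rw [mul_neg, matchgateForm_mul_self, neg_neg])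

theorem mul_matchgateForm_mul_transpose_apply (B : Matrix (Fin 4) (Fin 4) ℂ) (i j : Fin 4) :
    (B * matchgateForm * Bᵀ) i j =
      B i 0 * B j 3 - B i 1 * B j 2 + B i 2 * B j 1 - B i 3 * B j 0 := by
  simp [matchgateForm, Matrix.mul_apply, Fin.sum_univ_four]
  ring

theorem isMatchgate_of_mul_matchgateForm_mul_transpose {B : Matrix (Fin 4) (Fin 4) ℂ} {e : ℂ}
    (hrow : B * matchgateForm * Bᵀ = e • matchgateForm)
    (hcol : Bᵀ * matchgateForm * B = e • matchgateForm) : IsMatchgate B := by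
  have row (i j : Fin 4) :
      B i 0 * B j 3 - B i 1 * B j 2 + B i 2 * B j 1 - B i 3 * B j 0 = e * matchgateForm i j := by
    rw [← mul_matchgateForm_mul_transpose_apply, hrow, Matrix.smul_apply, smul_eq_mul]
  have col (i j : Fin 4) :
      B 0 i * B 3 j - B 1 i * B 2 j + B 2 i * B 1 j - B 3 i * B 0 j = e * matchgateForm i j := by
    simpa [hcol] using (mul_matchgateForm_mul_transpose_apply Bᵀ i j).symm
  have r01 := row 0 1
  have r02 := row 0 2
  have r03 := row 0 3
  have r12 := row 1 2
  have r13 := row 1 3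
  have r23 := row 2 3
  have c01 := col 0 1
  have c02 := col 0 2
  have c03 := col 0 3
  have c12 := col 1 2
  have c13 := col 1 3
  have c23 := col 2 3
  simp only [Fin.isValue, matchgateForm, Matrix.of_apply, Matrix.cons_val', Matrix.cons_val_one,
    Matrix.cons_val_zero, Matrix.cons_val_fin_one, mul_zero, Matrix.cons_val, mul_one,
    mul_neg] at r01 r02 r03 r12 r13 r23 c01 c02 c03 c12 c13 c23
  refine ⟨?_, ?_, ?_, ?_, ?_, ?_, ?_, ?_, ?_, ?_⟩
  · linear_combination (r03 + r12 + c03 + c12) / 2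
  · linear_combination r13
  · linear_combination r23
  · linear_combination c23
  · linear_combination c13
  · linear_combination r01
  · linear_combination c01
  · linear_combination (c03 + c12 - r03 - r12) / 2
  · linear_combination r02
  · linear_combination c02

theorem LJW_le_conformalAlgebra : LJW ≤ Matrix.conformalAlgebra matchgateForm := by
  rw [LJW, Submodule.span_le]
  intro M hM
  simp only [Set.mem_insert_iff, Set.mem_singleton_iff] at hM
  rw [SetLike.mem_coe, Matrix.mem_conformalAlgebra]
  rcases hM with rfl | rfl | rfl | rfl | rfl | rfl | rfl | rfl | rfl | rfl | rfl
  · exact ⟨2, by rw [mII, Matrix.transpose_one, one_mul, mul_one, two_smul]⟩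
  all_goals
    refine ⟨0, ?_⟩
    ext i j
    simp only [Matrix.add_apply, Matrix.mul_apply, Fin.sum_univ_four, Matrix.transpose_apply,
      Matrix.smul_apply, zero_smul]
    fin_cases i <;> fin_cases j <;>
      simp [mIX, mIY, mXZ, mYZ, mIZ, mXY, mYY, mXX, mYX, mZI, matchgateForm]

theorem exp_of_JW_span_isMatchgate (A : Matrix (Fin 4) (Fin 4) ℂ) (hA : A ∈ LJW) :
    IsMatchgate (NormedSpace.exp A) ∧ IsUnit (NormedSpace.exp A) := by
  obtain ⟨c, hc⟩ := LJW_le_conformalAlgebra hA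
  have hcT := Matrix.transpose_mul_add_mul_eq_smul matchgateForm_mul_self hc
  refine ⟨isMatchgate_of_mul_matchgateForm_mul_transpose
    (Matrix.exp_mul_mul_exp_transpose isUnit_matchgateForm hc) ?_, Matrix.isUnit_exp A⟩
  simpa [Matrix.exp_transpose] using Matrix.exp_mul_mul_exp_transpose isUnit_matchgateForm hcT
end
end

section
/- Let B be a 4×4 complex matrix with B44 ≠ 0. If B satisfies the five matchgate identities M1 = M2 = M3 = M4 = M5 = 0 (the five identities in which the entry B44 occurs), then B also satisfies the remaining five identities M6 = M7 = M8 = M9 = M10 = 0, and hence B is a matchgate. -/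
noncomputable section

/-!
Multiplied by `B 3 3`, each of the identities M6–M10 becomes a combination of M1–M5 with
entries of `B` as coefficients; since `B 3 3 ≠ 0` it can be cancelled.
-/

namespace Matchgate

variable {R : Type*} [CommRing R] [NoZeroDivisors R] {B : Matrix (Fin 4) (Fin 4) R}

theorem m6_of_m1_m2_m4_m5 (h44 : B 3 3 ≠ 0)
    (h1 : B 0 0 * B 3 3 - B 0 3 * B 3 0 - B 1 1 * B 2 2 + B 1 2 * B 2 1 = 0)
    (h2 : B 1 0 * B 3 3 - B 1 1 * B 3 2 + B 1 2 * B 3 1 - B 1 3 * B 3 0 = 0)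
    (h4 : B 0 2 * B 3 3 - B 0 3 * B 3 2 - B 1 2 * B 2 3 + B 1 3 * B 2 2 = 0)
    (h5 : B 0 1 * B 3 3 - B 0 3 * B 3 1 - B 1 1 * B 2 3 + B 1 3 * B 2 1 = 0) :
    B 0 0 * B 1 3 - B 0 1 * B 1 2 + B 0 2 * B 1 1 - B 0 3 * B 1 0 = 0 :=
  mul_left_cancel₀ h44 <| by
    linear_combination B 1 3 * h1 - B 1 2 * h5 + B 1 1 * h4 - B 0 3 * h2

theorem m7_of_m1_m2_m3_m5 (h44 : B 3 3 ≠ 0)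
    (h1 : B 0 0 * B 3 3 - B 0 3 * B 3 0 - B 1 1 * B 2 2 + B 1 2 * B 2 1 = 0)
    (h2 : B 1 0 * B 3 3 - B 1 1 * B 3 2 + B 1 2 * B 3 1 - B 1 3 * B 3 0 = 0)
    (h3 : B 2 0 * B 3 3 - B 2 1 * B 3 2 + B 2 2 * B 3 1 - B 2 3 * B 3 0 = 0)
    (h5 : B 0 1 * B 3 3 - B 0 3 * B 3 1 - B 1 1 * B 2 3 + B 1 3 * B 2 1 = 0) :
    B 0 0 * B 3 1 - B 0 1 * B 3 0 - B 1 0 * B 2 1 + B 1 1 * B 2 0 = 0 :=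
  mul_left_cancel₀ h44 <| by
    linear_combination B 3 1 * h1 - B 3 0 * h5 - B 2 1 * h2 + B 1 1 * h3

theorem m8_of_m2_m3_m4_m5 (h44 : B 3 3 ≠ 0)
    (h2 : B 1 0 * B 3 3 - B 1 1 * B 3 2 + B 1 2 * B 3 1 - B 1 3 * B 3 0 = 0)
    (h3 : B 2 0 * B 3 3 - B 2 1 * B 3 2 + B 2 2 * B 3 1 - B 2 3 * B 3 0 = 0)
    (h4 : B 0 2 * B 3 3 - B 0 3 * B 3 2 - B 1 2 * B 2 3 + B 1 3 * B 2 2 = 0)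
    (h5 : B 0 1 * B 3 3 - B 0 3 * B 3 1 - B 1 1 * B 2 3 + B 1 3 * B 2 1 = 0) :
    B 0 1 * B 3 2 - B 0 2 * B 3 1 - B 1 0 * B 2 3 + B 1 3 * B 2 0 = 0 :=
  mul_left_cancel₀ h44 <| by
    linear_combination B 3 2 * h5 - B 3 1 * h4 - B 2 3 * h2 + B 1 3 * h3

theorem m9_of_m1_m3_m4_m5 (h44 : B 3 3 ≠ 0)
    (h1 : B 0 0 * B 3 3 - B 0 3 * B 3 0 - B 1 1 * B 2 2 + B 1 2 * B 2 1 = 0)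
    (h3 : B 2 0 * B 3 3 - B 2 1 * B 3 2 + B 2 2 * B 3 1 - B 2 3 * B 3 0 = 0)
    (h4 : B 0 2 * B 3 3 - B 0 3 * B 3 2 - B 1 2 * B 2 3 + B 1 3 * B 2 2 = 0)
    (h5 : B 0 1 * B 3 3 - B 0 3 * B 3 1 - B 1 1 * B 2 3 + B 1 3 * B 2 1 = 0) :
    B 0 0 * B 2 3 - B 0 1 * B 2 2 + B 0 2 * B 2 1 - B 0 3 * B 2 0 = 0 :=
  mul_left_cancel₀ h44 <| by
    linear_combination B 2 3 * h1 - B 2 2 * h5 + B 2 1 * h4 - B 0 3 * h3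

theorem m10_of_m1_m2_m3_m4 (h44 : B 3 3 ≠ 0)
    (h1 : B 0 0 * B 3 3 - B 0 3 * B 3 0 - B 1 1 * B 2 2 + B 1 2 * B 2 1 = 0)
    (h2 : B 1 0 * B 3 3 - B 1 1 * B 3 2 + B 1 2 * B 3 1 - B 1 3 * B 3 0 = 0)
    (h3 : B 2 0 * B 3 3 - B 2 1 * B 3 2 + B 2 2 * B 3 1 - B 2 3 * B 3 0 = 0)
    (h4 : B 0 2 * B 3 3 - B 0 3 * B 3 2 - B 1 2 * B 2 3 + B 1 3 * B 2 2 = 0) :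
    B 0 0 * B 3 2 - B 0 2 * B 3 0 - B 1 0 * B 2 2 + B 1 2 * B 2 0 = 0 :=
  mul_left_cancel₀ h44 <| by
    linear_combination B 3 2 * h1 - B 3 0 * h4 - B 2 2 * h2 + B 1 2 * h3

end Matchgate

open Matchgate in
theorem matchgate_of_five_identities (B : Matrix (Fin 4) (Fin 4) ℂ)
    (h44 : B 3 3 ≠ 0)
    (h1 : B 0 0 * B 3 3 - B 0 3 * B 3 0 - B 1 1 * B 2 2 + B 1 2 * B 2 1 = 0)
    (h2 : B 1 0 * B 3 3 - B 1 1 * B 3 2 + B 1 2 * B 3 1 - B 1 3 * B 3 0 = 0)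
    (h3 : B 2 0 * B 3 3 - B 2 1 * B 3 2 + B 2 2 * B 3 1 - B 2 3 * B 3 0 = 0)
    (h4 : B 0 2 * B 3 3 - B 0 3 * B 3 2 - B 1 2 * B 2 3 + B 1 3 * B 2 2 = 0)
    (h5 : B 0 1 * B 3 3 - B 0 3 * B 3 1 - B 1 1 * B 2 3 + B 1 3 * B 2 1 = 0) :
    (B 0 0 * B 1 3 - B 0 1 * B 1 2 + B 0 2 * B 1 1 - B 0 3 * B 1 0 = 0 ∧
     B 0 0 * B 3 1 - B 0 1 * B 3 0 - B 1 0 * B 2 1 + B 1 1 * B 2 0 = 0 ∧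
     B 0 1 * B 3 2 - B 0 2 * B 3 1 - B 1 0 * B 2 3 + B 1 3 * B 2 0 = 0 ∧
     B 0 0 * B 2 3 - B 0 1 * B 2 2 + B 0 2 * B 2 1 - B 0 3 * B 2 0 = 0 ∧
     B 0 0 * B 3 2 - B 0 2 * B 3 0 - B 1 0 * B 2 2 + B 1 2 * B 2 0 = 0) ∧
    IsMatchgate B := by
  have m6 := m6_of_m1_m2_m4_m5 h44 h1 h2 h4 h5
  have m7 := m7_of_m1_m2_m3_m5 h44 h1 h2 h3 h5
  have m8 := m8_of_m2_m3_m4_m5 h44 h2 h3 h4 h5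
  have m9 := m9_of_m1_m3_m4_m5 h44 h1 h3 h4 h5
  have m10 := m10_of_m1_m2_m3_m4 h44 h1 h2 h3 h4
  exact ⟨⟨m6, m7, m8, m9, m10⟩, h1, h2, h3, h4, h5, m6, m7, m8, m9, m10⟩
end
end

section
/- A 4×4 complex matrix B is a 2-input 2-output matchgate if and only if the vector |F0⟩ = |1⟩⊗|4⟩ − |4⟩⊗|1⟩ − |2⟩⊗|3⟩ + |3⟩⊗|2⟩ in C⁴⊗C⁴ is an eigenvector of both B⊗B and Bᵀ⊗Bᵀ (where Bᵀ denotes the transpose of B). -/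
/-!
The coefficients of `F0` define the alternating form
`ω(x, y) = x₀y₃ - x₃y₀ - x₁y₂ + x₂y₁` on `ℂ⁴`, and the `(i, j)` entry of `(A ⊗ C) F0` is
`ω(Aᵢ, Cⱼ)` for the rows `Aᵢ`, `Cⱼ`. Since `ω` is alternating, `(B ⊗ B) F0` is antisymmetric, so it
is a multiple of `F0` exactly when the rows of `B` pair under `ω` like the standard basis up to a
common factor: four pairings vanish and `ω(B₀, B₃) = -ω(B₁, B₂)`. For `Bᵀ` the same holds for the
columns of `B`. These ten conditions are the matchgate identities, with `(M1)` and `(M8)` replaced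
by their sum and difference.
-/

noncomputable section

open Matrix Kronecker

/-- The antisymmetric vector `|F0⟩ = |1⟩|4⟩ − |4⟩|1⟩ − |2⟩|3⟩ + |3⟩|2⟩` in `ℂ⁴ ⊗ ℂ⁴`,
where `ℂ⁴ ⊗ ℂ⁴` is identified with `Fin 4 × Fin 4 → ℂ` and basis labels 1,2,3,4
correspond to indices 0,1,2,3. -/
def F0 : Fin 4 × Fin 4 → ℂ := fun p =>
  if p = (0, 3) then 1 else if p = (3, 0) then -1
  else if p = (1, 2) then -1 else if p = (2, 1) then 1 else 0

section Pairing

variable {R : Type*} [CommRing R]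

def fourPairing (x y : Fin 4 → R) : R :=
  x 0 * y 3 - x 3 * y 0 - x 1 * y 2 + x 2 * y 1

lemma fourPairing_swap (x y : Fin 4 → R) : fourPairing y x = -fourPairing x y := by
  unfold fourPairing; ring

def IsPairingConformal (A : Matrix (Fin 4) (Fin 4) R) : Prop :=
  fourPairing (A 0) (A 1) = 0 ∧ fourPairing (A 0) (A 2) = 0 ∧
  fourPairing (A 1) (A 3) = 0 ∧ fourPairing (A 2) (A 3) = 0 ∧
  fourPairing (A 0) (A 3) + fourPairing (A 1) (A 2) = 0

end Pairing

lemma kronecker_mulVec_F0_apply (A C : Matrix (Fin 4) (Fin 4) ℂ) (i j : Fin 4) :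
    ((A ⊗ₖ C) *ᵥ F0) (i, j) = fourPairing (A i) (C j) := by
  simp only [mulVec, dotProduct, Fintype.sum_prod_type, Fin.sum_univ_four, F0, kroneckerMap_apply,
    Prod.mk.injEq, Fin.reduceEq, and_true, and_false, if_true, if_false,
    mul_one, mul_neg, mul_zero, add_zero, zero_add, fourPairing]
  ring

lemma exists_eq_smul_F0_iff {v : Fin 4 × Fin 4 → ℂ} (hv : ∀ i j, v (j, i) = -v (i, j)) :
    (∃ c : ℂ, v = c • F0) ↔
      v (0, 1) = 0 ∧ v (0, 2) = 0 ∧ v (1, 3) = 0 ∧ v (2, 3) = 0 ∧ v (0, 3) + v (1, 2) = 0 := by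
  constructor
  · rintro ⟨c, rfl⟩
    simp [F0]
  · rintro ⟨h01, h02, h13, h23, h03⟩
    have h12 : v (1, 2) = -v (0, 3) := by linear_combination h03
    have hdiag (i : Fin 4) : v (i, i) = 0 := by linear_combination hv i i / 2
    refine ⟨v (0, 3), funext fun ⟨i, j⟩ => ?_⟩
    fin_cases i <;> fin_cases j <;> 
      simp [F0, hdiag, h01, h02, h13, h23, h12, hv 0 1, hv 0 2, hv 0 3, hv 1 2, hv 1 3, hv 2 3]

lemma exists_kronecker_self_mulVec_F0_eq_smul_iff (A : Matrix (Fin 4) (Fin 4) ℂ) :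
    (∃ c : ℂ, (A ⊗ₖ A) *ᵥ F0 = c • F0) ↔ IsPairingConformal A := by
  have hv : (A ⊗ₖ A) *ᵥ F0 = fun p => fourPairing (A p.1) (A p.2) :=
    funext fun ⟨i, j⟩ => kronecker_mulVec_F0_apply A A i j
  rw [hv, exists_eq_smul_F0_iff fun i j => fourPairing_swap (A i) (A j)]
  rfl

lemma isMatchgate_iff_isPairingConformal (B : Matrix (Fin 4) (Fin 4) ℂ) :
    IsMatchgate B ↔ IsPairingConformal B ∧ IsPairingConformal Bᵀ := by
  simp only [IsMatchgate, IsPairingConformal, fourPairing, transpose_apply]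
  constructor
  · rintro ⟨h1, h2, h3, h4, h5, h6, h7, h8, h9, h10⟩
    exact ⟨⟨by linear_combination h6, by linear_combination h9, by linear_combination h2,
      by linear_combination h3, by linear_combination h1 - h8⟩,
      ⟨by linear_combination h7, by linear_combination h10, by linear_combination h5,
      by linear_combination h4, by linear_combination h1 + h8⟩⟩
  · rintro ⟨⟨r01, r02, r13, r23, r03⟩, ⟨c01, c02, c13, c23, c03⟩⟩
    exact ⟨by linear_combination (r03 + c03) / 2, by linear_combination r13,
      by linear_combination r23, by linear_combination c23, by linear_combination c13,
      by linear_combination r01, by linear_combination c01, by linear_combination (c03 - r03) / 2,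
      by linear_combination r02, by linear_combination c02⟩

theorem isMatchgate_iff_F0_eigenvector (B : Matrix (Fin 4) (Fin 4) ℂ) :
    IsMatchgate B ↔
      ((∃ lam : ℂ, (B ⊗ₖ B).mulVec F0 = lam • F0) ∧
       (∃ mu : ℂ, (Bᵀ ⊗ₖ Bᵀ).mulVec F0 = mu • F0)) := by
  rw [isMatchgate_iff_isPairingConformal, exists_kronecker_self_mulVec_F0_eq_smul_iff,
    exists_kronecker_self_mulVec_F0_eq_smul_iff]
end
end

section
/- Let c_1, …, c_{2n} be the Jordan–Wigner operators on n qubits, let a = [a_{μν}] be an antisymmetric 2n×2n complex matrix, let A = Σ_{μ,ν=1}^{2n} a_{μν} c_μ c_ν, and let T = exp(A). Then for every μ, T c_μ T⁻¹ = Σ_{ν=1}^{2n} K_{μν} c_ν, where the 2n×2n matrix K = [K_{μν}] is given by K = exp(−4a). In particular, the complex linear span of c_1, …, c_{2n} is preserved under conjugation by T. -/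
noncomputable section

open Matrix

def pauliX : Matrix (Fin 2) (Fin 2) ℂ := !![0, 1; 1, 0]
def pauliY : Matrix (Fin 2) (Fin 2) ℂ := !![0, -Complex.I; Complex.I, 0]
def pauliZ : Matrix (Fin 2) (Fin 2) ℂ := !![1, 0; 0, -1]

/-- The Jordan–Wigner operators on `n` qubits, as matrices on the `n`-fold tensor
product `⊗ⁿ ℂ²`, identified with `(Fin n → Fin 2) → ℂ`.  Here `μ : Fin (2*n)`
(0-based) corresponds to `c_{μ+1}` (1-based), so that for `k = 1,…,n` (1-based)
`c_{2k-1} = Z^{⊗(k-1)} ⊗ X ⊗ I^{⊗(n-k)}` and `c_{2k} = Z^{⊗(k-1)} ⊗ Y ⊗ I^{⊗(n-k)}`: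
the entry of a tensor product of one-qubit matrices is the product of the entries
of the factors. -/
def JW (n : ℕ) (μ : Fin (2 * n)) : Matrix (Fin n → Fin 2) (Fin n → Fin 2) ℂ :=
  fun x y => ∏ s : Fin n,
    (if (s : ℕ) < (μ : ℕ) / 2 then pauliZ
     else if (s : ℕ) = (μ : ℕ) / 2 then (if (μ : ℕ) % 2 = 0 then pauliX else pauliY)
     else (1 : Matrix (Fin 2) (Fin 2) ℂ)) (x s) (y s)

/-!
The Clifford relations `c_μ c_ν + c_ν c_μ = 2 δ_{μν}` make the commutator with
`A = Σ a_{μν} c_μ c_ν` act on the `c_μ` through the matrix `-4 a`: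
`A c_μ - c_μ A = Σ_ν (-4 a)_{μν} c_ν` for antisymmetric `a`. To exponentiate, pass to matrices
over the algebra: with `C_{kl} = c_k`, `Â = diag(A)` and `M̂ = -4 a` as a scalar matrix, this reads
`Â C - C Â = M̂ C`, i.e. `C Â = (Â - M̂) C`. As `M̂` commutes with `Â`, exponentiating gives
`C exp Â = exp (-M̂) exp Â C`, whose entries are `exp A c_μ exp (-A) = Σ_ν exp(-4 a)_{μν} c_ν`.
-/

open NormedSpace Matrix

section Exponential

variable {𝔸 : Type*} [NormedRing 𝔸] [NormedAlgebra ℚ 𝔸] [CompleteSpace 𝔸]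

theorem exp_mul_exp_neg (a : 𝔸) : exp a * exp (-a) = 1 := by
  rw [← exp_add_of_commute (Commute.refl a).neg_right, add_neg_cancel, exp_zero]

theorem exp_mul_eq_exp_mul_mul_exp_of_commutator {a m x : 𝔸} (ham : Commute a m)
    (h : a * x - x * a = m * x) : exp a * x = exp m * x * exp a := by
  have hsemi : SemiconjBy x a (-m + a) := by
    rw [SemiconjBy, add_mul, neg_mul, ← h, neg_sub, sub_add_cancel]
  rw [mul_assoc, hsemi.exp_right, exp_add_of_commute ham.neg_right.symm, ← mul_assoc,
    ← mul_assoc, ← exp_add_of_commute (Commute.refl m).neg_right, add_neg_cancel, exp_zero,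
    one_mul]

end Exponential

-- Instance search does not see that the uniform structure of the operator norm is the product one.
open scoped Matrix.Norms.Operator in
theorem Matrix.completeSpace_linftyOp {ι R : Type*} [Fintype ι] [DecidableEq ι] [NormedRing R]
    [CompleteSpace R] : @CompleteSpace (Matrix ι ι R) PseudoMetricSpace.toUniformSpace :=
  (inferInstance : CompleteSpace (ι → ι → R))

theorem exp_mul_mul_exp_neg_eq_sum_of_commutator {ι 𝕜 E : Type*} [Fintype ι] [DecidableEq ι]
    [NormedField 𝕜] [NormedAlgebra ℚ 𝕜] [CompleteSpace 𝕜]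
    [NormedRing E] [NormedAlgebra ℚ E] [NormedAlgebra 𝕜 E] [CompleteSpace E]
    (A : E) (c : ι → E) (M : Matrix ι ι 𝕜) (h : ∀ i, A * c i - c i * A = ∑ j, M i j • c j)
    (i : ι) : exp A * c i * exp (-A) = ∑ j, exp M i j • c j := by
  let m : Matrix ι ι 𝕜 →+* Matrix ι ι E := (algebraMap 𝕜 E).mapMatrix
  let C : Matrix ι ι E := of fun k _ => c k
  have hcomm : Commute (diagonal fun _ => A) (m M) := by
    ext k l
    simp [m, diagonal_mul, mul_diagonal, Algebra.commutes]
  have hcommutator : diagonal (fun _ => A) * C - C * diagonal (fun _ => A) = m M * C := by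
    ext k l
    simp [m, C, mul_apply, diagonal_apply, h, Algebra.smul_def]
  -- `exp` of a matrix depends only on the topology; the operator norm just gives access to the
  -- Banach-algebra lemmas.
  have := Matrix.completeSpace_linftyOp (ι := ι) (R := E)
  have := Matrix.completeSpace_linftyOp (ι := ι) (R := 𝕜)
  have hexp : exp (m M) = m (exp M) := by
    open scoped Matrix.Norms.Operator in
    exact (map_exp m (continuous_id.matrix_map (continuous_algebraMap 𝕜 E)) M).symm
  have key : exp (diagonal fun _ => A) * C = exp (m M) * C * exp (diagonal fun _ => A) := by
    open scoped Matrix.Norms.Operator in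
    exact exp_mul_eq_exp_mul_mul_exp_of_commutator hcomm hcommutator
  have key_ii := congr($key i i * exp (-A))
  rw [hexp, exp_diagonal] at key_ii
  simpa [C, m, mul_apply, diagonal_apply, Pi.coe_exp, mul_assoc, exp_mul_exp_neg,
    Algebra.smul_def] using key_ii

section Anticommuting

variable {𝕜 R ι : Type*} [CommRing 𝕜] [Ring R] [Algebra 𝕜 R] [DecidableEq ι] {c : ι → R}

theorem commutator_mul_of_anticomm
    (hc : ∀ μ ν, c μ * c ν + c ν * c μ = if μ = ν then 2 else 0) (α β μ : ι) :
    c α * c β * c μ - c μ * (c α * c β) =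
      c α * (if β = μ then 2 else 0) - (if α = μ then 2 else 0) * c β := by
  rw [← hc, ← hc]
  noncomm_ring

theorem commutator_quadratic_of_anticomm [Fintype ι]
    (hc : ∀ μ ν, c μ * c ν + c ν * c μ = if μ = ν then 2 else 0)
    {a : Matrix ι ι 𝕜} (ha : aᵀ = -a) (μ : ι) :
    (∑ α, ∑ β, a α β • (c α * c β)) * c μ - c μ * ∑ α, ∑ β, a α β • (c α * c β) =
      ∑ ν, ((-4 : 𝕜) • a) μ ν • c ν := by
  have hanti : ∀ α β, a α β = -a β α := fun α β => by
    simpa using congrFun (congrFun ha β) α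
  simp_rw [Finset.sum_mul, Finset.mul_sum, ← Finset.sum_sub_distrib, smul_mul_assoc,
    mul_smul_comm, ← smul_sub, commutator_mul_of_anticomm hc]
  simp only [mul_ite, mul_zero, ite_mul, zero_mul, smul_sub, smul_ite, smul_zero,
    Finset.sum_sub_distrib, Finset.sum_ite_eq', Finset.sum_ite_irrel, Finset.mem_univ, if_true,
    Finset.sum_const_zero]
  rw [← Finset.sum_sub_distrib]
  refine Finset.sum_congr rfl fun ν _ => ?_
  rw [hanti ν μ, mul_two, two_mul, Matrix.smul_apply, smul_eq_mul]
  module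

end Anticommuting

namespace Matrix

variable {ι m R : Type*} [Fintype ι] [CommRing R]

def piKronecker (f : ι → Matrix m m R) : Matrix (ι → m) (ι → m) R :=
  of fun x y => ∏ i, f i (x i) (y i)

theorem piKronecker_mul [DecidableEq ι] [Fintype m] (f g : ι → Matrix m m R) :
    piKronecker f * piKronecker g = piKronecker (f * g) := by
  ext x y
  simp only [piKronecker, mul_apply, of_apply, Pi.mul_apply, ← Finset.prod_mul_distrib]
  rw [Finset.prod_univ_sum, Fintype.piFinset_univ]

theorem piKronecker_one [DecidableEq m] : piKronecker (1 : ι → Matrix m m R) = 1 := by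
  ext x y
  simp [piKronecker, one_apply, Finset.prod_boole, funext_iff]

theorem piKronecker_mul_anticomm [DecidableEq ι] [Fintype m] {f g : ι → Matrix m m R} (i : ι)
    (hi : f i * g i = -(g i * f i)) (hcomm : ∀ j ≠ i, f j * g j = g j * f j) :
    piKronecker f * piKronecker g = -(piKronecker g * piKronecker f) := by
  rw [piKronecker_mul, piKronecker_mul]
  ext x y
  simp only [piKronecker, of_apply, neg_apply, Pi.mul_apply]
  rw [← Finset.mul_prod_erase _ _ (Finset.mem_univ i),
    ← Finset.mul_prod_erase _ (fun j => (g j * f j) (x j) (y j)) (Finset.mem_univ i), hi,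
    Finset.prod_congr rfl fun j hj => by rw [hcomm j (Finset.ne_of_mem_erase hj)], neg_apply,
    neg_mul]

end Matrix

theorem pauliX_mul_self : pauliX * pauliX = 1 := by simp [pauliX, one_fin_two]
theorem pauliY_mul_self : pauliY * pauliY = 1 := by simp [pauliY, one_fin_two]
theorem pauliZ_mul_self : pauliZ * pauliZ = 1 := by simp [pauliZ, one_fin_two]
theorem pauliX_mul_pauliY : pauliX * pauliY = -(pauliY * pauliX) := by simp [pauliX, pauliY]
theorem pauliX_mul_pauliZ : pauliX * pauliZ = -(pauliZ * pauliX) := by simp [pauliX, pauliZ]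
theorem pauliY_mul_pauliZ : pauliY * pauliZ = -(pauliZ * pauliY) := by simp [pauliY, pauliZ]

def jwFactor (n : ℕ) (μ : Fin (2 * n)) (s : Fin n) : Matrix (Fin 2) (Fin 2) ℂ :=
  if (s : ℕ) < (μ : ℕ) / 2 then pauliZ
  else if (s : ℕ) = (μ : ℕ) / 2 then (if (μ : ℕ) % 2 = 0 then pauliX else pauliY)
  else 1

section JordanWigner

variable {n : ℕ}

theorem JW_eq_piKronecker (μ : Fin (2 * n)) : JW n μ = piKronecker (jwFactor n μ) := rfl

theorem jwFactor_mul_self (μ : Fin (2 * n)) (s : Fin n) :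
    jwFactor n μ s * jwFactor n μ s = 1 := by
  unfold jwFactor
  split_ifs <;> simp [pauliX_mul_self, pauliY_mul_self, pauliZ_mul_self]

theorem jwFactor_mul_comm {μ ν : Fin (2 * n)} {s : Fin n}
    (hs : (s : ℕ) ≠ min ((μ : ℕ) / 2) ((ν : ℕ) / 2)) :
    jwFactor n μ s * jwFactor n ν s = jwFactor n ν s * jwFactor n μ s := by
  unfold jwFactor
  split_ifs <;> first | rfl | simp | omega

theorem jwFactor_mul_anticomm {μ ν : Fin (2 * n)} (h : μ ≠ ν) {s : Fin n}
    (hs : (s : ℕ) = min ((μ : ℕ) / 2) ((ν : ℕ) / 2)) :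
    jwFactor n μ s * jwFactor n ν s = -(jwFactor n ν s * jwFactor n μ s) := by
  have : (μ : ℕ) ≠ ν := Fin.val_ne_of_ne h
  unfold jwFactor
  split_ifs <;> first
    | omega
    | simp only [pauliX_mul_pauliY, pauliX_mul_pauliZ, pauliY_mul_pauliZ, neg_neg]

theorem JW_mul_self (μ : Fin (2 * n)) : JW n μ * JW n μ = 1 := by
  rw [JW_eq_piKronecker, piKronecker_mul, ← piKronecker_one]
  exact congrArg piKronecker (funext (jwFactor_mul_self μ))

theorem JW_mul_anticomm {μ ν : Fin (2 * n)} (h : μ ≠ ν) :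
    JW n μ * JW n ν = -(JW n ν * JW n μ) := by
  have hlt : min ((μ : ℕ) / 2) ((ν : ℕ) / 2) < n := by omega
  exact piKronecker_mul_anticomm ⟨_, hlt⟩ (jwFactor_mul_anticomm h rfl)
    fun s hs => jwFactor_mul_comm fun hs' => hs (Fin.ext hs')

theorem JW_anticommutator (μ ν : Fin (2 * n)) :
    JW n μ * JW n ν + JW n ν * JW n μ = if μ = ν then 2 else 0 := by
  split_ifs with h
  · rw [h, JW_mul_self, one_add_one_eq_two]
  · rw [JW_mul_anticomm h, neg_add_cancel]

end JordanWigner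

theorem conj_exp_quadratic_JW (n : ℕ) (a : Matrix (Fin (2 * n)) (Fin (2 * n)) ℂ)
    (ha : aᵀ = -a)
    (A : Matrix (Fin n → Fin 2) (Fin n → Fin 2) ℂ)
    (hA : A = ∑ μ : Fin (2 * n), ∑ ν : Fin (2 * n), a μ ν • (JW n μ * JW n ν)) :
    (∀ μ : Fin (2 * n),
      NormedSpace.exp A * JW n μ * NormedSpace.exp (-A) =
        ∑ ν : Fin (2 * n), (NormedSpace.exp ((-4 : ℂ) • a)) μ ν • JW n ν) ∧
    (∀ B ∈ Submodule.span ℂ (Set.range (JW n)),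
      NormedSpace.exp A * B * NormedSpace.exp (-A) ∈
        Submodule.span ℂ (Set.range (JW n))) := by
  have hcommutator (μ : Fin (2 * n)) :
      A * JW n μ - JW n μ * A = ∑ ν, ((-4 : ℂ) • a) μ ν • JW n ν :=
    hA ▸ commutator_quadratic_of_anticomm JW_anticommutator ha μ
  have hconj (μ : Fin (2 * n)) :
      exp A * JW n μ * exp (-A) = ∑ ν, exp ((-4 : ℂ) • a) μ ν • JW n ν := by
    have := Matrix.completeSpace_linftyOp (ι := Fin n → Fin 2) (R := ℂ)
    open scoped Matrix.Norms.Operator in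
    exact exp_mul_mul_exp_neg_eq_sum_of_commutator A (JW n) _ hcommutator μ
  refine ⟨hconj, fun B hB => ?_⟩
  let conj := LinearMap.mulLeft ℂ (exp A) ∘ₗ LinearMap.mulRight ℂ (exp (-A))
  have hspan : Submodule.span ℂ (Set.range (JW n)) ≤
      (Submodule.span ℂ (Set.range (JW n))).comap conj := by
    refine Submodule.span_le.2 (Set.range_subset_iff.2 fun μ => ?_)
    simp only [SetLike.mem_coe, Submodule.mem_comap, conj, LinearMap.comp_apply,
      LinearMap.mulRight_apply, LinearMap.mulLeft_apply, ← mul_assoc, hconj μ]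
    exact Submodule.sum_mem _ fun ν _ => Submodule.smul_mem _ _ (Submodule.subset_span ⟨ν, rfl⟩)
  simpa [conj, mul_assoc] using hspan hB
end
end

section
/- Let c_1 = X⊗I, c_2 = Y⊗I, c_3 = Z⊗X, c_4 = Z⊗Y be the Jordan–Wigner operators on 2 qubits. For every pair of matrices V, W ∈ SU(2) there exists a real antisymmetric 4×4 matrix h = [h_{μν}] such that, setting H = i Σ_{μ,ν=1}^{4} h_{μν} c_μ c_ν, the matrix H is Hermitian and exp(iH) = G(V,W), where G(V,W) is the 4×4 matrix with entries G_{11}=p, G_{14}=q, G_{41}=r, G_{44}=s (the entries of V = [[p,q],[r,s]]), G_{22}=w, G_{23}=x, G_{32}=y, G_{33}=z (the entries of W = [[w,x],[y,z]]), and all other entries zero. -/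
noncomputable section

open Matrix Complex

/- The Jordan–Wigner operators on 2 qubits, written as explicit 4×4 matrices in
the basis `00,01,10,11` ↔ `1,2,3,4`:
`c₁ = X⊗I`, `c₂ = Y⊗I`, `c₃ = Z⊗X`, `c₄ = Z⊗Y`. -/
def cJW : Fin 4 → Matrix (Fin 4) (Fin 4) ℂ
  | 0 => !![0,0,1,0; 0,0,0,1; 1,0,0,0; 0,1,0,0]
  | 1 => !![0,0,-I,0; 0,0,0,-I; I,0,0,0; 0,I,0,0]
  | 2 => !![0,1,0,0; 1,0,0,0; 0,0,0,-1; 0,0,-1,0]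
  | 3 => !![0,-I,0,0; I,0,0,0; 0,0,0,I; 0,0,-I,0]

/-- `G(V,W)` for 2×2 matrices `V = [[p,q],[r,s]]`, `W = [[w,x],[y,z]]`. -/
def Gmat (V W : Matrix (Fin 2) (Fin 2) ℂ) : Matrix (Fin 4) (Fin 4) ℂ :=
  !![V 0 0, 0, 0, V 0 1;
     0, W 0 0, W 0 1, 0;
     0, W 1 0, W 1 1, 0;
     V 1 0, 0, 0, V 1 1]

/-!
Every `V ∈ SU(2)` is `exp (i σ(n))` for a real vector `n`, where `σ(n) = n₁X + n₂Y + n₃Z`: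
writing `V = c + i σ(v)` with `c² + ‖v‖² = 1` and `v = ‖v‖ u` for a unit vector `u`, the
involution `P = σ(u)` gives `exp (i t P) = cos t + i sin t P`, so `t = arccos c` works.
On the other side, `G` is the block-diagonal embedding of `M₂ × M₂` into `M₄` (with `V` on the
even-parity states `1, 4` and `W` on the odd ones `2, 3`), so it commutes with `exp`, and
every `G(σ(n), σ(n'))` is a quadratic Hamiltonian in the Jordan–Wigner operators.
-/

section Involution

variable {A : Type*} [NormedRing A] [NormedAlgebra ℂ A] [Algebra ℚ A]

/-- Sends `(1, 0)` and `(0, 1)` to the spectral projections `(1 + P) / 2` and `(1 - P) / 2`. -/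
def involutionAlgHom {P : A} (hP : P * P = 1) : ℂ × ℂ →ₐ[ℂ] A where
  toFun u := ((u.1 + u.2) / 2) • 1 + ((u.1 - u.2) / 2) • P
  map_one' := by
    simp only [Prod.fst_one, Prod.snd_one]
    match_scalars <;> ring
  map_mul' u v := by
    simp only [Prod.fst_mul, Prod.snd_mul, add_mul, mul_add, smul_mul_smul, mul_one, one_mul, hP]
    match_scalars <;> ring
  map_zero' := by simp
  map_add' u v := by
    simp only [Prod.fst_add, Prod.snd_add]
    match_scalars <;> ring
  commutes' c := by
    simp only [Algebra.algebraMap_eq_smul_one, Prod.smul_fst, Prod.smul_snd, Prod.fst_one,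
      Prod.snd_one]
    match_scalars <;> ring

theorem exp_smul_of_mul_self_eq_one {P : A} (hP : P * P = 1) (z : ℂ) :
    NormedSpace.exp (z • P) = cosh z • 1 + sinh z • P := by
  have hf : Continuous (involutionAlgHom hP) := by
    change Continuous fun u : ℂ × ℂ => ((u.1 + u.2) / 2) • (1 : A) + ((u.1 - u.2) / 2) • P
    fun_prop
  have hzP : involutionAlgHom hP (z, -z) = z • P := by
    change ((z + -z) / 2) • (1 : A) + ((z - -z) / 2) • P = z • P
    match_scalars <;> ring
  have hexp : NormedSpace.exp ((z, -z) : ℂ × ℂ) = (exp z, exp (-z)) := by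
    ext <;> simp [Complex.exp_eq_exp_ℂ]
  rw [← hzP, ← NormedSpace.map_exp (involutionAlgHom hP) hf, hexp]
  rfl

end Involution

theorem exists_norm_eq_one_and_norm_smul_eq {V : Type*} [NormedAddCommGroup V] [NormedSpace ℝ V]
    [Nontrivial V] (v : V) : ∃ u : V, ‖u‖ = 1 ∧ ‖v‖ • u = v := by
  by_cases hv : v = 0
  · obtain ⟨u, hu⟩ := exists_norm_eq V zero_le_one
    exact ⟨u, hu, by simp [hv]⟩
  · exact ⟨NormedSpace.normalize v, NormedSpace.norm_normalize hv,
      NormedSpace.norm_smul_normalize v⟩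

/-- `σ(n) = n₁ X + n₂ Y + n₃ Z`. -/
def pauliDot (n : EuclideanSpace ℝ (Fin 3)) : Matrix (Fin 2) (Fin 2) ℂ :=
  !![(n 2 : ℂ), n 0 - n 1 * I; n 0 + n 1 * I, -n 2]

theorem pauliDot_isHermitian (n : EuclideanSpace ℝ (Fin 3)) : (pauliDot n).IsHermitian := by
  ext i j
  fin_cases i <;> fin_cases j <;> simp [pauliDot, conjTranspose_apply, sub_eq_add_neg]

theorem pauliDot_smul (r : ℝ) (n : EuclideanSpace ℝ (Fin 3)) :
    pauliDot (r • n) = (r : ℂ) • pauliDot n := by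
  ext i j
  fin_cases i <;> fin_cases j <;> simp [pauliDot] <;> ring

theorem pauliDot_mul_self (n : EuclideanSpace ℝ (Fin 3)) :
    pauliDot n * pauliDot n = ((‖n‖ ^ 2 : ℝ) : ℂ) • 1 := by
  rw [EuclideanSpace.real_norm_sq_eq, Fin.sum_univ_three]
  ext i j
  fin_cases i <;> fin_cases j <;> simp [pauliDot, mul_apply, Fin.sum_univ_two] <;> ring_nf <;>
    simp [I_sq]

theorem exp_I_smul_pauliDot {u : EuclideanSpace ℝ (Fin 3)} (hu : ‖u‖ = 1) (t : ℝ) :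
    NormedSpace.exp (I • pauliDot (t • u)) =
      (Real.cos t : ℂ) • 1 + (I * Real.sin t) • pauliDot u := by
  let _ : NormedRing (Matrix (Fin 2) (Fin 2) ℂ) := Matrix.linftyOpNormedRing
  let _ : NormedAlgebra ℂ (Matrix (Fin 2) (Fin 2) ℂ) := Matrix.linftyOpNormedAlgebra
  have hP : pauliDot u * pauliDot u = 1 := by simp [pauliDot_mul_self, hu]
  rw [pauliDot_smul, smul_smul, mul_comm]
  refine (exp_smul_of_mul_self_eq_one hP _).trans ?_
  rw [cosh_mul_I, sinh_mul_I, ofReal_cos, ofReal_sin, mul_comm I]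

section SpecialUnitary

variable {V : Matrix (Fin 2) (Fin 2) ℂ}

theorem apply_of_mem_specialUnitaryGroup_fin_two (hV : V ∈ specialUnitaryGroup (Fin 2) ℂ) :
    V 1 0 = -star (V 0 1) ∧ V 1 1 = star (V 0 0) ∧ normSq (V 0 0) + normSq (V 0 1) = 1 := by
  obtain ⟨hU, hdet⟩ := mem_specialUnitaryGroup_iff.mp hV
  have hVV : V * star V = 1 := mem_unitaryGroup_iff.mp hU
  have hstar : star V = adjugate V := by
    rw [← inv_eq_right_inv hVV, Matrix.inv_def, hdet, Ring.inverse_one, one_smul]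
  rw [adjugate_fin_two] at hstar
  have h00 := congrFun₂ hstar 0 0
  have h01 := congrFun₂ hstar 0 1
  have hnorm := congrArg re (congrFun₂ hVV 0 0)
  simp [star_apply, mul_apply] at h00 h01 hnorm
  refine ⟨?_, ?_, ?_⟩
  · simpa using congrArg star h01
  · simpa using h00.symm
  · simpa [normSq_apply] using hnorm

theorem exists_eq_smul_one_add_I_smul_pauliDot (hV : V ∈ specialUnitaryGroup (Fin 2) ℂ) :
    ∃ (c : ℝ) (v : EuclideanSpace ℝ (Fin 3)),
      c ^ 2 + ‖v‖ ^ 2 = 1 ∧ V = (c : ℂ) • 1 + I • pauliDot v := by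
  obtain ⟨h10, h11, hnorm⟩ := apply_of_mem_specialUnitaryGroup_fin_two hV
  refine ⟨(V 0 0).re, !₂[(V 0 1).im, (V 0 1).re, (V 0 0).im], ?_, ?_⟩
  · rw [EuclideanSpace.real_norm_sq_eq, Fin.sum_univ_three]
    simp only [normSq_apply] at hnorm
    simp
    linarith
  · ext i j
    fin_cases i <;> fin_cases j <;> simp [pauliDot, h10, h11] <;> apply Complex.ext <;> simp

theorem exists_exp_I_smul_pauliDot_eq (hV : V ∈ specialUnitaryGroup (Fin 2) ℂ) :
    ∃ n : EuclideanSpace ℝ (Fin 3), NormedSpace.exp (I • pauliDot n) = V := by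
  obtain ⟨c, v, hcv, rfl⟩ := exists_eq_smul_one_add_I_smul_pauliDot hV
  obtain ⟨u, hu, hvu⟩ := exists_norm_eq_one_and_norm_smul_eq v
  have hc : c ^ 2 ≤ 1 := by nlinarith
  have hsin : Real.sin (Real.arccos c) = ‖v‖ := by
    rw [Real.sin_arccos, ← hcv, add_sub_cancel_left, Real.sqrt_sq (norm_nonneg v)]
  refine ⟨Real.arccos c • u, ?_⟩
  rw [exp_I_smul_pauliDot hu, Real.cos_arccos (by nlinarith) (by nlinarith), hsin]
  conv_rhs => rw [← hvu, pauliDot_smul, smul_smul]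

end SpecialUnitary

def parityEquiv : Fin 2 × Fin 2 ≃ Fin 4 where
  toFun p := ![![0, 1], ![3, 2]] p.1 p.2
  invFun := ![(0, 0), (0, 1), (1, 1), (1, 0)]
  left_inv := by decide
  right_inv := by decide

theorem Gmat_eq_reindex_blockDiagonal (V W : Matrix (Fin 2) (Fin 2) ℂ) :
    Gmat V W = reindex parityEquiv parityEquiv (blockDiagonal ![V, W]) := by
  ext i j
  fin_cases i <;> fin_cases j <;> rfl

theorem Matrix.exp_reindex {m n 𝔸 : Type*} [Fintype m] [DecidableEq m] [Fintype n]
    [DecidableEq n] [Ring 𝔸] [Algebra ℚ 𝔸] [TopologicalSpace 𝔸] [IsTopologicalRing 𝔸] [T2Space 𝔸]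
    (e : m ≃ n) (M : Matrix m m 𝔸) :
    NormedSpace.exp (reindex e e M) = reindex e e (NormedSpace.exp M) := by
  simp only [NormedSpace.exp_eq_tsum_rat, ← coe_reindexAlgEquiv ℚ 𝔸 e, ← map_pow, ← map_smul]
  exact (Function.LeftInverse.map_tsum _ (g := reindexAlgEquiv ℚ 𝔸 e)
    (continuous_id.matrix_reindex e e) (continuous_id.matrix_reindex e.symm e.symm)
    (fun M => by simp)).symm

theorem exp_Gmat (V W : Matrix (Fin 2) (Fin 2) ℂ) :
    NormedSpace.exp (Gmat V W) = Gmat (NormedSpace.exp V) (NormedSpace.exp W) := by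
  rw [Gmat_eq_reindex_blockDiagonal, Matrix.exp_reindex, exp_blockDiagonal,
    Gmat_eq_reindex_blockDiagonal]
  congr 2
  -- `Pi.coe_exp` needs normed algebras; the operator norm induces the product topology.
  open scoped Matrix.Norms.Operator in
  have : CompleteSpace (Matrix (Fin 2) (Fin 2) ℂ) := FiniteDimensional.complete ℂ _
  ext k : 1
  fin_cases k <;> exact Pi.coe_exp _ _

theorem Gmat_smul (c : ℂ) (V W : Matrix (Fin 2) (Fin 2) ℂ) :
    c • Gmat V W = Gmat (c • V) (c • W) := by
  ext i j
  fin_cases i <;> fin_cases j <;> simp [Gmat]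

theorem Gmat_isHermitian {V W : Matrix (Fin 2) (Fin 2) ℂ} (hV : V.IsHermitian)
    (hW : W.IsHermitian) : (Gmat V W).IsHermitian := by
  ext i j
  fin_cases i <;> fin_cases j <;> simp [Gmat, conjTranspose_apply, hV.apply, hW.apply]

/- Since the `cJW μ` anticommute, `H = ∑_{μ<ν} h μ ν • 2i cJW μ * cJW ν`, and each `2i cJW μ * cJW ν`
acts as `∓2` times a Pauli matrix on both the even block `{1, 4}` and the odd block `{2, 3}`
(e.g. `2i c₁c₂ = -2 Z⊗I` and `2i c₃c₄ = -2 I⊗Z`); sums and differences of such pairs give `h`. -/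
def matchgateCoeffs (n n' : EuclideanSpace ℝ (Fin 3)) : Matrix (Fin 4) (Fin 4) ℝ :=
  (4⁻¹ : ℝ) • !![0, -(n 2 + n' 2), n 1 + n' 1, n' 0 - n 0;
    n 2 + n' 2, 0, -(n 0 + n' 0), n' 1 - n 1;
    -(n 1 + n' 1), n 0 + n' 0, 0, n' 2 - n 2;
    n 0 - n' 0, n 1 - n' 1, n 2 - n' 2, 0]

theorem matchgateCoeffs_transpose (n n' : EuclideanSpace ℝ (Fin 3)) :
    (matchgateCoeffs n n')ᵀ = -matchgateCoeffs n n' := by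
  ext i j
  fin_cases i <;> fin_cases j <;> simp [matchgateCoeffs] <;> ring

set_option maxHeartbeats 1000000 in
theorem quadraticHamiltonian_matchgateCoeffs (n n' : EuclideanSpace ℝ (Fin 3)) :
    I • ∑ μ : Fin 4, ∑ ν : Fin 4, (matchgateCoeffs n n' μ ν : ℂ) • (cJW μ * cJW ν) =
      Gmat (pauliDot n) (pauliDot n') := by
  ext i j
  simp only [Fin.sum_univ_four, cJW, matchgateCoeffs]
  fin_cases i <;> fin_cases j <;> simp [Gmat, pauliDot] <;> ring_nf <;> simp [I_sq]

theorem fermionic_matchgate_from_quadratic_hamiltonian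
    (V W : Matrix (Fin 2) (Fin 2) ℂ)
    (hV : V ∈ Matrix.specialUnitaryGroup (Fin 2) ℂ)
    (hW : W ∈ Matrix.specialUnitaryGroup (Fin 2) ℂ) :
    ∃ h : Matrix (Fin 4) (Fin 4) ℝ, hᵀ = -h ∧
      ∃ H : Matrix (Fin 4) (Fin 4) ℂ,
        H = Complex.I • ∑ μ : Fin 4, ∑ ν : Fin 4, (h μ ν : ℂ) • (cJW μ * cJW ν) ∧
        H.IsHermitian ∧
        NormedSpace.exp (Complex.I • H) = Gmat V W := by
  obtain ⟨n, hn⟩ := exists_exp_I_smul_pauliDot_eq hV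
  obtain ⟨n', hn'⟩ := exists_exp_I_smul_pauliDot_eq hW
  refine ⟨matchgateCoeffs n n', matchgateCoeffs_transpose n n', _, rfl, ?_, ?_⟩
  · rw [quadraticHamiltonian_matchgateCoeffs]
    exact Gmat_isHermitian (pauliDot_isHermitian n) (pauliDot_isHermitian n')
  · rw [quadraticHamiltonian_matchgateCoeffs, Gmat_smul, exp_Gmat, hn, hn']
end
end
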